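/- arXiv:1605.03841 — 2 statements merged into one kernel-verified Lean document; each statement's English description precedes it below -/
import Mathlib

section
/- Let K be a commutative ring. The K-algebra presented by generators v₁,…,vₙ, e₁,…,eₙ₋₁, e₁*,…,eₙ₋₁* with relations vᵢvⱼ = δᵢⱼvᵢ, vᵢeᵢ = eᵢ = eᵢvᵢ₊₁, vᵢ₊₁eᵢ* = eᵢ* = eᵢ*vᵢ, eᵢ*eⱼ = δᵢⱼvᵢ₊₁, and vᵢ = eᵢeᵢ* for i < n, is isomorphic to the full matrix algebra Mₙ(K), via vᵢ ↦ Eᵢᵢ, eᵢ ↦ E_{i,i+1}, eᵢ* ↦ E_{i+1,i}. -/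
universe u
noncomputable section

variable (K : Type u) [CommRing K] (n : ℕ)

/-- Generators of the Leavitt path algebra of the line graph `A_{n+1}`:
`n+1` vertices, `n` edges and `n` ghost edges. -/
abbrev LineGen (n : ℕ) := Fin (n + 1) ⊕ Fin n ⊕ Fin n

/-- The vertex generator `vᵢ`. -/
def Vg (i : Fin (n + 1)) : FreeAlgebra K (LineGen n) := FreeAlgebra.ι K (Sum.inl i)
/-- The edge generator `eᵢ : vᵢ → vᵢ₊₁`. -/
def Eg (i : Fin n) : FreeAlgebra K (LineGen n) := FreeAlgebra.ι K (Sum.inr (Sum.inl i))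
/-- The ghost edge generator `eᵢ*`. -/
def Sg (i : Fin n) : FreeAlgebra K (LineGen n) := FreeAlgebra.ι K (Sum.inr (Sum.inr i))

/-- The defining relations of the Leavitt path algebra of the line graph:
`vᵢvⱼ = δᵢⱼvᵢ`, `vᵢeᵢ = eᵢ = eᵢvᵢ₊₁`, `vᵢ₊₁eᵢ* = eᵢ* = eᵢ*vᵢ`, `eᵢ*eⱼ = δᵢⱼvᵢ₊₁`,
`vᵢ = eᵢeᵢ*` (for `i < n`), together with `Σᵢ vᵢ = 1` (the identity of the
Leavitt path algebra is the sum of the vertices). -/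
inductive lineRel : FreeAlgebra K (LineGen n) → FreeAlgebra K (LineGen n) → Prop
  | vv (i j : Fin (n + 1)) : lineRel (Vg K n i * Vg K n j) (if i = j then Vg K n i else 0)
  | ve (i : Fin n) : lineRel (Vg K n i.castSucc * Eg K n i) (Eg K n i)
  | ev (i : Fin n) : lineRel (Eg K n i * Vg K n i.succ) (Eg K n i)
  | vs (i : Fin n) : lineRel (Vg K n i.succ * Sg K n i) (Sg K n i)
  | sv (i : Fin n) : lineRel (Sg K n i * Vg K n i.castSucc) (Sg K n i)
  | ck1 (i j : Fin n) : lineRel (Sg K n i * Eg K n j) (if i = j then Vg K n i.succ else 0)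
  | ck2 (i : Fin n) : lineRel (Vg K n i.castSucc) (Eg K n i * Sg K n i)
  | unit : lineRel (∑ i : Fin (n + 1), Vg K n i) 1

/-- The presented algebra (the Leavitt path algebra of the line graph `A_{n+1}`). -/
abbrev LinePathAlgebra := RingQuot (lineRel K n)

/-- The quotient map. -/
def pmk : FreeAlgebra K (LineGen n) →ₐ[K] LinePathAlgebra K n :=
  RingQuot.mkAlgHom K (lineRel K n)

/-!
Inside the presented algebra, let `pᵢ = v₀e₀e₁⋯eᵢ₋₁` be the path from `v₀` to `vᵢ` and
`qᵢ = eᵢ₋₁*⋯e₀*v₀` the ghost path back. The relations give `qᵢpᵢ = vᵢ`, `pᵢqᵢ = v₀` and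
`pⱼqₖ = 0` for `j ≠ k`, so `wᵢⱼ = qᵢpⱼ` is a complete system of matrix units. It defines an
algebra map from `M_{n+1}(K)` that is inverse to the map sending the generators to the
prescribed matrix units.
-/

namespace Matrix

variable {R A ι : Type*} [CommSemiring R] [Semiring A] [Algebra R A] [Fintype ι] [DecidableEq ι]

def liftMatrixUnits (w : ι → ι → A)
    (mul_w : ∀ i j k l, w i j * w k l = if j = k then w i l else 0) (sum_w : ∑ i, w i i = 1) :
    Matrix ι ι R →ₐ[R] A :=
  AlgHom.ofLinearMap (liftLinear R fun i j => LinearMap.toSpanSingleton R A (w i j))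
    (by simp [← sum_single_one, map_sum, sum_w])
    (by
      intro M N
      induction M using Matrix.induction_on' with
      | h_zero => simp
      | h_add M M' hM hM' => simp only [add_mul, map_add, hM, hM']
      | h_std_basis i j a =>
        induction N using Matrix.induction_on' with
        | h_zero => simp
        | h_add N N' hN hN' => simp only [mul_add, map_add, hN, hN']
        | h_std_basis k l b =>
          by_cases hjk : j = k
          · subst hjk
            simp [mul_w, smul_smul, mul_comm]
          · simp [mul_w, hjk])

@[simp]
theorem liftMatrixUnits_single (w : ι → ι → A)
    (mul_w : ∀ i j k l, w i j * w k l = if j = k then w i l else 0) (sum_w : ∑ i, w i i = 1)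
    (i j : ι) (c : R) :
    liftMatrixUnits w mul_w sum_w (single i j c) = c • w i j := by
  simp [liftMatrixUnits]

end Matrix

open Matrix

section LineFamily

variable {A : Type*} [Semiring A] {n}

structure IsLineFamily (v : Fin (n + 1) → A) (e s : Fin n → A) : Prop where
  v_mul_v : ∀ i j, v i * v j = if i = j then v i else 0
  v_mul_e : ∀ i, v i.castSucc * e i = e i
  e_mul_v : ∀ i, e i * v i.succ = e i
  v_mul_s : ∀ i, v i.succ * s i = s i
  s_mul_v : ∀ i, s i * v i.castSucc = s i
  s_mul_e : ∀ i j, s i * e j = if i = j then v i.succ else 0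
  e_mul_s : ∀ i, e i * s i = v i.castSucc
  sum_v : ∑ i, v i = 1

def linePath (v₀ : A) (e : Fin n → A) : Fin (n + 1) → A :=
  Fin.induction v₀ fun i p => p * e i

def lineGhostPath (v₀ : A) (s : Fin n → A) : Fin (n + 1) → A :=
  Fin.induction v₀ fun i q => s i * q

@[simp]
theorem linePath_succ (v₀ : A) (e : Fin n → A) (i : Fin n) :
    linePath v₀ e i.succ = linePath v₀ e i.castSucc * e i := rfl

@[simp]
theorem lineGhostPath_succ (v₀ : A) (s : Fin n → A) (i : Fin n) :
    lineGhostPath v₀ s i.succ = s i * lineGhostPath v₀ s i.castSucc := rfl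

theorem map_linePath {B F : Type*} [Semiring B] [FunLike F A B] [RingHomClass F A B] (f : F)
    (v₀ : A) (e : Fin n → A) (i : Fin (n + 1)) :
    f (linePath v₀ e i) = linePath (f v₀) (fun j => f (e j)) i := by
  induction i using Fin.induction with
  | zero => rfl
  | succ i ih => simp [ih]

theorem map_lineGhostPath {B F : Type*} [Semiring B] [FunLike F A B] [RingHomClass F A B] (f : F)
    (v₀ : A) (s : Fin n → A) (i : Fin (n + 1)) :
    f (lineGhostPath v₀ s i) = lineGhostPath (f v₀) (fun j => f (s j)) i := by
  induction i using Fin.induction with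
  | zero => rfl
  | succ i ih => simp [ih]

def lineMatrixUnit (v₀ : A) (e s : Fin n → A) (i j : Fin (n + 1)) : A :=
  lineGhostPath v₀ s i * linePath v₀ e j

namespace IsLineFamily

variable {v : Fin (n + 1) → A} {e s : Fin n → A}

theorem v_mul_self (h : IsLineFamily v e s) (i : Fin (n + 1)) : v i * v i = v i := by
  simp [h.v_mul_v]

theorem linePath_mul_v (h : IsLineFamily v e s) (i : Fin (n + 1)) :
    linePath (v 0) e i * v i = linePath (v 0) e i := by
  induction i using Fin.induction with
  | zero => exact h.v_mul_self 0
  | succ i _ => rw [linePath_succ, mul_assoc, h.e_mul_v]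

theorem v_mul_lineGhostPath (h : IsLineFamily v e s) (i : Fin (n + 1)) :
    v i * lineGhostPath (v 0) s i = lineGhostPath (v 0) s i := by
  induction i using Fin.induction with
  | zero => exact h.v_mul_self 0
  | succ i _ => rw [lineGhostPath_succ, ← mul_assoc, h.v_mul_s]

theorem lineGhostPath_mul_linePath (h : IsLineFamily v e s) (i : Fin (n + 1)) :
    lineGhostPath (v 0) s i * linePath (v 0) e i = v i := by
  induction i using Fin.induction with
  | zero => exact h.v_mul_self 0
  | succ i ih =>
    calc s i * lineGhostPath (v 0) s i.castSucc * (linePath (v 0) e i.castSucc * e i)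
        = s i * (lineGhostPath (v 0) s i.castSucc * linePath (v 0) e i.castSucc) * e i := by
          simp only [mul_assoc]
      _ = v i.succ := by rw [ih, h.s_mul_v, h.s_mul_e, if_pos rfl]

theorem linePath_mul_lineGhostPath_self (h : IsLineFamily v e s) (i : Fin (n + 1)) :
    linePath (v 0) e i * lineGhostPath (v 0) s i = v 0 := by
  induction i using Fin.induction with
  | zero => exact h.v_mul_self 0
  | succ i ih =>
    calc linePath (v 0) e i.castSucc * e i * (s i * lineGhostPath (v 0) s i.castSucc)
        = linePath (v 0) e i.castSucc * (e i * s i) * lineGhostPath (v 0) s i.castSucc := by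
          simp only [mul_assoc]
      _ = v 0 := by rw [h.e_mul_s, h.linePath_mul_v, ih]

theorem linePath_mul_lineGhostPath (h : IsLineFamily v e s) (i j : Fin (n + 1)) :
    linePath (v 0) e i * lineGhostPath (v 0) s j = if i = j then v 0 else 0 := by
  split_ifs with hij
  · subst hij
    exact h.linePath_mul_lineGhostPath_self i
  · rw [← h.linePath_mul_v, ← h.v_mul_lineGhostPath, mul_assoc, ← mul_assoc (v i), h.v_mul_v,
      if_neg hij, zero_mul, mul_zero]

theorem lineGhostPath_mul_v_zero (h : IsLineFamily v e s) (i : Fin (n + 1)) :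
    lineGhostPath (v 0) s i * v 0 = lineGhostPath (v 0) s i := by
  calc lineGhostPath (v 0) s i * v 0
      = lineGhostPath (v 0) s i * linePath (v 0) e i * lineGhostPath (v 0) s i := by
        rw [mul_assoc, h.linePath_mul_lineGhostPath_self]
    _ = lineGhostPath (v 0) s i := by rw [h.lineGhostPath_mul_linePath, h.v_mul_lineGhostPath]

theorem lineMatrixUnit_mul (h : IsLineFamily v e s) (i j k l : Fin (n + 1)) :
    lineMatrixUnit (v 0) e s i j * lineMatrixUnit (v 0) e s k l =
      if j = k then lineMatrixUnit (v 0) e s i l else 0 := by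
  simp only [lineMatrixUnit, mul_assoc, ← mul_assoc (linePath (v 0) e j),
    h.linePath_mul_lineGhostPath]
  split_ifs
  · rw [← mul_assoc, h.lineGhostPath_mul_v_zero]
  · simp

theorem lineMatrixUnit_self (h : IsLineFamily v e s) (i : Fin (n + 1)) :
    lineMatrixUnit (v 0) e s i i = v i :=
  h.lineGhostPath_mul_linePath i

theorem lineMatrixUnit_castSucc_succ (h : IsLineFamily v e s) (i : Fin n) :
    lineMatrixUnit (v 0) e s i.castSucc i.succ = e i := by
  rw [lineMatrixUnit, linePath_succ, ← mul_assoc, h.lineGhostPath_mul_linePath, h.v_mul_e]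

theorem lineMatrixUnit_succ_castSucc (h : IsLineFamily v e s) (i : Fin n) :
    lineMatrixUnit (v 0) e s i.succ i.castSucc = s i := by
  rw [lineMatrixUnit, lineGhostPath_succ, mul_assoc, h.lineGhostPath_mul_linePath, h.s_mul_v]

theorem sum_lineMatrixUnit_self (h : IsLineFamily v e s) :
    ∑ i, lineMatrixUnit (v 0) e s i i = 1 := by
  simp only [h.lineMatrixUnit_self, h.sum_v]

end IsLineFamily

theorem linePath_single {R : Type*} [Semiring R] (i : Fin (n + 1)) :
    linePath (single 0 0 1) (fun j : Fin n => single j.castSucc j.succ (1 : R)) i =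
      single 0 i 1 := by
  induction i using Fin.induction with
  | zero => rfl
  | succ i ih => rw [linePath_succ, ih, single_mul_single_same, mul_one]

theorem lineGhostPath_single {R : Type*} [Semiring R] (i : Fin (n + 1)) :
    lineGhostPath (single 0 0 1) (fun j : Fin n => single j.succ j.castSucc (1 : R)) i =
      single i 0 1 := by
  induction i using Fin.induction with
  | zero => rfl
  | succ i ih => rw [lineGhostPath_succ, ih, single_mul_single_same, mul_one]

end LineFamily

namespace LinePathAlgebra

def generatorMatrix : LineGen n → Matrix (Fin (n + 1)) (Fin (n + 1)) K
  | .inl i => single i i 1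
  | .inr (.inl i) => single i.castSucc i.succ 1
  | .inr (.inr i) => single i.succ i.castSucc 1

theorem lift_generatorMatrix_rel ⦃x y : FreeAlgebra K (LineGen n)⦄ (h : lineRel K n x y) :
    FreeAlgebra.lift K (generatorMatrix K n) x = FreeAlgebra.lift K (generatorMatrix K n) y := by
  induction h with
  | vv i j | ck1 i j =>
    by_cases hij : i = j
    · subst hij; simp [Vg, Eg, Sg, generatorMatrix]
    · simp [Vg, Eg, Sg, generatorMatrix, hij, single_mul_single_of_ne]
  | unit => simp [Vg, generatorMatrix, sum_single_one]
  | _ => simp [Vg, Eg, Sg, generatorMatrix]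

def toMatrix : LinePathAlgebra K n →ₐ[K] Matrix (Fin (n + 1)) (Fin (n + 1)) K :=
  RingQuot.liftAlgHom K ⟨FreeAlgebra.lift K (generatorMatrix K n), lift_generatorMatrix_rel K n⟩

theorem toMatrix_pmk_ι (g : LineGen n) :
    toMatrix K n (pmk K n (FreeAlgebra.ι K g)) = generatorMatrix K n g := by
  simp [toMatrix, pmk, RingQuot.liftAlgHom_mkAlgHom_apply]

theorem isLineFamily_generators :
    IsLineFamily (fun i => pmk K n (Vg K n i)) (fun i => pmk K n (Eg K n i))
      (fun i => pmk K n (Sg K n i)) := by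
  have rel {x y} (h : lineRel K n x y) : pmk K n x = pmk K n y := RingQuot.mkAlgHom_rel K h
  exact {
    v_mul_v i j := by simpa [apply_ite (pmk K n)] using rel (.vv i j)
    v_mul_e i := by simpa using rel (.ve i)
    e_mul_v i := by simpa using rel (.ev i)
    v_mul_s i := by simpa using rel (.vs i)
    s_mul_v i := by simpa using rel (.sv i)
    s_mul_e i j := by simpa [apply_ite (pmk K n)] using rel (.ck1 i j)
    e_mul_s i := by simpa using (rel (.ck2 i)).symm
    sum_v := by simpa using rel .unit }

theorem toMatrix_vertex (i : Fin (n + 1)) : toMatrix K n (pmk K n (Vg K n i)) = single i i 1 :=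
  toMatrix_pmk_ι K n _

theorem toMatrix_edge (i : Fin n) :
    toMatrix K n (pmk K n (Eg K n i)) = single i.castSucc i.succ 1 :=
  toMatrix_pmk_ι K n _

theorem toMatrix_ghostEdge (i : Fin n) :
    toMatrix K n (pmk K n (Sg K n i)) = single i.succ i.castSucc 1 :=
  toMatrix_pmk_ι K n _

def matrixUnit : Fin (n + 1) → Fin (n + 1) → LinePathAlgebra K n :=
  lineMatrixUnit (pmk K n (Vg K n 0)) (fun i => pmk K n (Eg K n i)) (fun i => pmk K n (Sg K n i))

theorem toMatrix_matrixUnit (i j : Fin (n + 1)) :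
    toMatrix K n (matrixUnit K n i j) = single i j 1 := by
  rw [matrixUnit, lineMatrixUnit, map_mul, map_linePath, map_lineGhostPath]
  simp only [toMatrix_vertex, toMatrix_edge, toMatrix_ghostEdge, linePath_single,
    lineGhostPath_single, single_mul_single_same, mul_one]

def ofMatrix : Matrix (Fin (n + 1)) (Fin (n + 1)) K →ₐ[K] LinePathAlgebra K n :=
  liftMatrixUnits (matrixUnit K n) (isLineFamily_generators K n).lineMatrixUnit_mul
    (isLineFamily_generators K n).sum_lineMatrixUnit_self

theorem ofMatrix_single (i j : Fin (n + 1)) (c : K) :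
    ofMatrix K n (single i j c) = c • matrixUnit K n i j :=
  liftMatrixUnits_single _ _ _ i j c

theorem toMatrix_comp_ofMatrix : (toMatrix K n).comp (ofMatrix K n) = AlgHom.id K _ := by
  apply AlgHom.toLinearMap_injective
  refine ext_linearMap K fun i j => LinearMap.ext_ring ?_
  simp [ofMatrix_single, toMatrix_matrixUnit]

theorem ofMatrix_comp_toMatrix : (ofMatrix K n).comp (toMatrix K n) = AlgHom.id K _ := by
  refine RingQuot.ringQuot_ext' K _ _ (FreeAlgebra.hom_ext (funext fun g => ?_))
  have h := isLineFamily_generators K n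
  rcases g with i | i | i
  · change ofMatrix K n (toMatrix K n (pmk K n (Vg K n i))) = pmk K n (Vg K n i)
    rw [toMatrix_vertex, ofMatrix_single, one_smul]
    exact h.lineMatrixUnit_self i
  · change ofMatrix K n (toMatrix K n (pmk K n (Eg K n i))) = pmk K n (Eg K n i)
    rw [toMatrix_edge, ofMatrix_single, one_smul]
    exact h.lineMatrixUnit_castSucc_succ i
  · change ofMatrix K n (toMatrix K n (pmk K n (Sg K n i))) = pmk K n (Sg K n i)
    rw [toMatrix_ghostEdge, ofMatrix_single, one_smul]
    exact h.lineMatrixUnit_succ_castSucc i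

def equivMatrix : LinePathAlgebra K n ≃ₐ[K] Matrix (Fin (n + 1)) (Fin (n + 1)) K :=
  AlgEquiv.ofAlgHom (toMatrix K n) (ofMatrix K n) (toMatrix_comp_ofMatrix K n)
    (ofMatrix_comp_toMatrix K n)

end LinePathAlgebra

/-- for a commutative ring `K`, the `K`-algebra presented by the
generators `vᵢ, eᵢ, eᵢ*` and the Leavitt path algebra relations of the line graph
with `n+1` vertices is isomorphic to the full matrix algebra `M_{n+1}(K)`, via
`vᵢ ↦ Eᵢᵢ`, `eᵢ ↦ E_{i,i+1}`, `eᵢ* ↦ E_{i+1,i}`. -/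
theorem stmt_3 :
    ∃ φ : LinePathAlgebra K n ≃ₐ[K] Matrix (Fin (n + 1)) (Fin (n + 1)) K,
      (∀ i : Fin (n + 1), φ (pmk K n (Vg K n i)) = Matrix.single i i 1) ∧
      (∀ i : Fin n, φ (pmk K n (Eg K n i)) = Matrix.single i.castSucc i.succ 1) ∧
      (∀ i : Fin n, φ (pmk K n (Sg K n i)) = Matrix.single i.succ i.castSucc 1) :=
  ⟨LinePathAlgebra.equivMatrix K n, LinePathAlgebra.toMatrix_vertex K n,
    LinePathAlgebra.toMatrix_edge K n, LinePathAlgebra.toMatrix_ghostEdge K n⟩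
end
end

section
/- Let K be a field. Then the Jacobson algebra A = K⟨x,y⟩/(xy − 1) has a K-vector space basis given by the set {yⁱxʲ : i, j ≥ 0}. -/
universe u
noncomputable section

variable (K : Type u) [Field K]

/-- The generator `x` of the free algebra `K⟨x,y⟩`. -/
def Xgen : FreeAlgebra K Bool := FreeAlgebra.ι K true
/-- The generator `y` of the free algebra `K⟨x,y⟩`. -/
def Ygen : FreeAlgebra K Bool := FreeAlgebra.ι K false

/-- The relation `xy = 1`, generating the two-sided ideal `(xy − 1)`. -/
inductive jacRel : FreeAlgebra K Bool → FreeAlgebra K Bool → Prop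
  | rel : jacRel (Xgen K * Ygen K) 1

/-- The Jacobson algebra `A = K⟨x,y⟩/(xy − 1)`. -/
abbrev JacobsonAlgebra := RingQuot (jacRel K)

/-- The quotient map `K⟨x,y⟩ → A`. -/
def jmk : FreeAlgebra K Bool →ₐ[K] JacobsonAlgebra K := RingQuot.mkAlgHom K (jacRel K)

/-!
Rewriting with `xy = 1` shows `xʲ yᵏ = y^(k-j) x^(j-k)`, so the product of two monomials
`yⁱxʲ · yᵏxˡ` is again a monomial and the monomials span `A`. For independence, let `A` act
on the vector space with basis `e_{i,j}`: `y` sends `e_{i,j}` to `e_{i+1,j}`, and `x` sends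
`e_{i+1,j}` to `e_{i,j}` and `e_{0,j}` to `e_{0,j+1}`. Then `xy` acts as the identity, and
`yⁱxʲ` sends `e_{0,0}` to `e_{i,j}`.
-/

theorem Finsupp.lmapDomain_pow_single {α R : Type*} [CommSemiring R] (f : α → α) (n : ℕ)
    (a : α) (r : R) :
    (Finsupp.lmapDomain R R f ^ n) (Finsupp.single a r) = Finsupp.single (f^[n] a) r := by
  induction n with
  | zero => rfl
  | succ n ih =>
    rw [pow_succ', Module.End.mul_apply, ih, Finsupp.lmapDomain_apply, Finsupp.mapDomain_single,
      Function.iterate_succ_apply']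

namespace JacobsonAlgebra

def xShift : ℕ × ℕ → ℕ × ℕ
  | (0, j) => (0, j + 1)
  | (i + 1, j) => (i, j)

def yShift (p : ℕ × ℕ) : ℕ × ℕ := (p.1 + 1, p.2)

theorem xShift_comp_yShift : xShift ∘ yShift = id := rfl

theorem xShift_iterate_zero (j : ℕ) : xShift^[j] (0, 0) = (0, j) := by
  induction j with
  | zero => rfl
  | succ j ih => rw [Function.iterate_succ_apply', ih]; rfl

theorem yShift_iterate (i j : ℕ) : yShift^[i] (0, j) = (i, j) := by
  induction i with
  | zero => rfl
  | succ i ih => rw [Function.iterate_succ_apply', ih]; rfl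

section Action

variable (R : Type*) [CommSemiring R]

def xAct : Module.End R ((ℕ × ℕ) →₀ R) := Finsupp.lmapDomain R R xShift

def yAct : Module.End R ((ℕ × ℕ) →₀ R) := Finsupp.lmapDomain R R yShift

theorem xAct_mul_yAct : xAct R * yAct R = 1 := by
  rw [xAct, yAct, Module.End.mul_eq_comp, ← Finsupp.lmapDomain_comp, xShift_comp_yShift,
    Finsupp.lmapDomain_id, Module.End.one_eq_id]

end Action

def monomialRep : JacobsonAlgebra K →ₐ[K] Module.End K ((ℕ × ℕ) →₀ K) :=
  RingQuot.liftAlgHom K ⟨FreeAlgebra.lift K fun b => if b then xAct K else yAct K, by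
    rintro _ _ ⟨⟩
    simp [Xgen, Ygen, xAct_mul_yAct]⟩

def monomial (p : ℕ × ℕ) : JacobsonAlgebra K := jmk K (Ygen K ^ p.1 * Xgen K ^ p.2)

theorem monomialRep_monomial_single (p : ℕ × ℕ) :
    monomialRep K (monomial K p) (Finsupp.single (0, 0) 1) = Finsupp.single p 1 := by
  obtain ⟨i, j⟩ := p
  have hx : monomialRep K (jmk K (Xgen K)) = xAct K := by simp [monomialRep, jmk, Xgen]
  have hy : monomialRep K (jmk K (Ygen K)) = yAct K := by simp [monomialRep, jmk, Ygen]
  rw [monomial, map_mul, map_mul, map_pow, map_pow, map_pow, map_pow, hx, hy,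
    Module.End.mul_apply, xAct, yAct, Finsupp.lmapDomain_pow_single,
    Finsupp.lmapDomain_pow_single,
    xShift_iterate_zero, yShift_iterate]

theorem linearIndependent_monomial : LinearIndependent K (monomial K) := by
  let evalAtOrigin : JacobsonAlgebra K →ₗ[K] (ℕ × ℕ) →₀ K :=
    LinearMap.applyₗ (Finsupp.single (0, 0) 1) ∘ₗ (monomialRep K).toLinearMap
  have h : evalAtOrigin ∘ monomial K = fun p => Finsupp.single p 1 :=
    funext (monomialRep_monomial_single K)
  refine LinearIndependent.of_comp evalAtOrigin ?_
  rw [h, ← Finsupp.coe_basisSingleOne]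
  exact Finsupp.basisSingleOne.linearIndependent

theorem jmk_Xgen_mul_Ygen : jmk K (Xgen K * Ygen K) = 1 := by
  simpa [jmk] using RingQuot.mkAlgHom_rel K (jacRel.rel (K := K))

theorem jmk_Xgen_pow_mul_Ygen_pow (j k : ℕ) :
    jmk K (Xgen K ^ j * Ygen K ^ k) = jmk K (Ygen K ^ (k - j) * Xgen K ^ (j - k)) := by
  induction j generalizing k with
  | zero => simp
  | succ j ih =>
    cases k with
    | zero => simp
    | succ k =>
      have h : Xgen K ^ (j + 1) * Ygen K ^ (k + 1)
          = Xgen K ^ j * (Xgen K * Ygen K) * Ygen K ^ k := by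
        rw [pow_succ, pow_succ']
        simp only [mul_assoc]
      rw [h, map_mul, map_mul, jmk_Xgen_mul_Ygen, mul_one, ← map_mul, ih, Nat.add_sub_add_right,
        Nat.add_sub_add_right]

theorem monomial_mul_monomial (p q : ℕ × ℕ) :
    monomial K p * monomial K q = monomial K (p.1 + (q.1 - p.2), (p.2 - q.1) + q.2) := by
  have h : Ygen K ^ p.1 * Xgen K ^ p.2 * (Ygen K ^ q.1 * Xgen K ^ q.2)
      = Ygen K ^ p.1 * (Xgen K ^ p.2 * Ygen K ^ q.1) * Xgen K ^ q.2 := by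
    simp only [mul_assoc]
  rw [monomial, monomial, ← map_mul, h, map_mul, map_mul, jmk_Xgen_pow_mul_Ygen_pow, ← map_mul,
    ← map_mul, monomial, pow_add, pow_add]
  simp only [mul_assoc]

theorem mul_mem_span_monomial {a b : JacobsonAlgebra K}
    (ha : a ∈ Submodule.span K (Set.range (monomial K)))
    (hb : b ∈ Submodule.span K (Set.range (monomial K))) :
    a * b ∈ Submodule.span K (Set.range (monomial K)) := by
  have hmul : Submodule.span K (Set.range (monomial K)) * Submodule.span K (Set.range (monomial K))
      ≤ Submodule.span K (Set.range (monomial K)) := by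
    rw [Submodule.span_mul_span]
    refine Submodule.span_le.2 ?_
    rintro _ ⟨_, ⟨p, rfl⟩, _, ⟨q, rfl⟩, rfl⟩
    show monomial K p * monomial K q ∈ _
    rw [monomial_mul_monomial]
    exact Submodule.subset_span ⟨_, rfl⟩
  exact hmul (Submodule.mul_mem_mul ha hb)

theorem span_range_monomial : Submodule.span K (Set.range (monomial K)) = ⊤ := by
  refine Submodule.eq_top_iff'.2 fun a => ?_
  obtain ⟨w, rfl⟩ : ∃ w, jmk K w = a := RingQuot.mkAlgHom_surjective K (jacRel K) a
  induction w using FreeAlgebra.induction with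
  | grade0 r =>
    have h : jmk K (algebraMap K _ r) = r • monomial K (0, 0) := by
      simp [monomial, Algebra.algebraMap_eq_smul_one]
    rw [h]
    exact Submodule.smul_mem _ r (Submodule.subset_span ⟨_, rfl⟩)
  | grade1 b =>
    cases b
    · exact Submodule.subset_span ⟨(1, 0), by simp [monomial, Ygen]⟩
    · exact Submodule.subset_span ⟨(0, 1), by simp [monomial, Xgen]⟩
  | mul a b ha hb => rw [map_mul]; exact mul_mem_span_monomial K ha hb
  | add a b ha hb => rw [map_add]; exact add_mem ha hb

end JacobsonAlgebra

/-- for a field `K`, the monomials `yⁱxʲ` (for `i, j ≥ 0`) form a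
`K`-vector space basis of the Jacobson algebra `A = K⟨x,y⟩/(xy − 1)`. -/
theorem stmt_18 :
    ∃ B : Module.Basis (ℕ × ℕ) K (JacobsonAlgebra K),
      ∀ p : ℕ × ℕ, B p = jmk K (Ygen K ^ p.1 * Xgen K ^ p.2) :=
  ⟨Module.Basis.mk (JacobsonAlgebra.linearIndependent_monomial K)
    (JacobsonAlgebra.span_range_monomial K).ge,
    fun p => Module.Basis.mk_apply _ _ p⟩
end
end
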